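/- Consider an ALG-schedule and a reference time t ≥ 0. If j, i ∈ N(t) and there is an E_N-edge (j,i) in the borrow graph (i.e., i is processed at some time u ∈ I_j with i ∈ N(u)), then y_j(t) ≥ y_i(t). -/

import Mathlib

open MeasureTheory Set

open scoped Classical

noncomputable section

variable {J : Type*}

/-- Total work done on job `j` by time `u` under the schedule `σ`. -/
def workDone (σ : ℝ → J → ℝ) (j : J) (u : ℝ) : ℝ := ∫ v in (0:ℝ)..u, σ v j

/-- Remaining processing time of job `j` at time `u`. -/
def remT (p : J → ℝ) (σ : ℝ → J → ℝ) (j : J) (u : ℝ) : ℝ := p j - workDone σ j u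

/-- Completion time of job `j`: the least `u` with `workDone σ j u = p j`,
    and `⊤` if the job never completes. -/
def cTime (p : J → ℝ) (σ : ℝ → J → ℝ) (j : J) : EReal :=
  sInf ((fun v : ℝ => (v : EReal)) '' {v : ℝ | workDone σ j v = p j})

/-- Job `j` is available at time `u`: released and not yet completed. -/
def availAt (r p : J → ℝ) (σ : ℝ → J → ℝ) (u : ℝ) (j : J) : Prop :=
  r j ≤ u ∧ (u : EReal) < cTime p σ j

/-- Job `j` is processed at time `u`. -/
def procAt (σ : ℝ → J → ℝ) (u : ℝ) (j : J) : Prop := 0 < σ u j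

/-- Job `j` is non-clairvoyant at time `u`. -/
def ncAt (r p : J → ℝ) (α : ℝ) (σ : ℝ → J → ℝ) (u : ℝ) (j : J) : Prop :=
  availAt r p σ u j ∧ workDone σ j u ≤ α * p j

/-- Job `j` is clairvoyant at time `u`. -/
def clAt (r p : J → ℝ) (α : ℝ) (σ : ℝ → J → ℝ) (u : ℝ) (j : J) : Prop :=
  availAt r p σ u j ∧ α * p j < workDone σ j u

/-- The time at which job `j` emits its signal: the least `u` with
    `workDone σ j u = α * p j`. -/
def emitT (p : J → ℝ) (α : ℝ) (σ : ℝ → J → ℝ) (j : J) : ℝ :=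
  sInf {u : ℝ | workDone σ j u = α * p j}

/-- Data of an instance: nonnegative release dates, positive processing times
    and `α ∈ (0,1)`. -/
structure IsInstance (r p : J → ℝ) (α : ℝ) : Prop where
  r_nonneg : ∀ j, 0 ≤ r j
  p_pos : ∀ j, 0 < p j
  alpha_mem : α ∈ Set.Ioo (0 : ℝ) 1

/-- `σ` is a (feasible, preemptive, single machine) schedule. -/
structure IsSchedule [Fintype J] (r p : J → ℝ) (σ : ℝ → J → ℝ) : Prop where
  meas : ∀ j, Measurable fun u => σ u j
  nonneg : ∀ u j, 0 ≤ σ u j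
  sum_le_one : ∀ u, ∑ j, σ u j ≤ 1
  zero_before_release : ∀ u j, u < r j → σ u j = 0
  workDone_le : ∀ u j, workDone σ j u ≤ p j

/-- A schedule is non-idling if it uses the full machine capacity whenever
    some job is available. -/
def NonIdling [Fintype J] (r p : J → ℝ) (σ : ℝ → J → ℝ) : Prop :=
  ∀ u, (∃ j, availAt r p σ u j) → ∑ j, σ u j = 1

/-- The SRPT condition at time `u`: `Cl(u) ≠ ∅` and
    `min_{j ∈ Cl(u)} p_j(u) ≤ ((1-α)/α) · min_{j ∈ N(u)} y_j(u)`
    (the minimum over the empty set being `+∞`). -/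
def SrptCond (r p : J → ℝ) (α : ℝ) (σ : ℝ → J → ℝ) (u : ℝ) : Prop :=
  ∃ k, clAt r p α σ u k ∧
    ∀ j, ncAt r p α σ u j → remT p σ k u ≤ ((1 - α) / α) * workDone σ j u

/-- `k` is a clairvoyant job of minimal remaining processing time at `u`,
    emitting last among those. -/
def IsSrptChoice (r p : J → ℝ) (α : ℝ) (σ : ℝ → J → ℝ) (u : ℝ) (k : J) : Prop :=
  clAt r p α σ u k ∧
    (∀ j, clAt r p α σ u j → remT p σ k u ≤ remT p σ j u) ∧
    (∀ j, clAt r p α σ u j → remT p σ j u = remT p σ k u →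
      emitT p α σ j ≤ emitT p α σ k)

/-- `j` is a non-clairvoyant job with minimal progress at time `u`. -/
def IsMinNc (r p : J → ℝ) (α : ℝ) (σ : ℝ → J → ℝ) (u : ℝ) (j : J) : Prop :=
  ncAt r p α σ u j ∧ ∀ j', ncAt r p α σ u j' → workDone σ j u ≤ workDone σ j' u

/-- `σ` is an ALG-schedule: non-idling, and at any time with available jobs it
    either runs a single clairvoyant job of shortest remaining processing time
    (breaking ties by latest emission) when the SRPT condition holds, or it runs
    exactly the non-clairvoyant jobs of minimal progress at equal rates. -/
structure IsALG [Fintype J] (r p : J → ℝ) (α : ℝ) (σ : ℝ → J → ℝ) : Prop where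
  sched : IsSchedule r p σ
  nonidling : NonIdling r p σ
  srpt_branch : ∀ u, (∃ j, availAt r p σ u j) → SrptCond r p α σ u →
    ∃ k, IsSrptChoice r p α σ u k ∧ ∀ j, j ≠ k → σ u j = 0
  setf_branch : ∀ u, (∃ j, availAt r p σ u j) → ¬ SrptCond r p α σ u →
    (∀ j, procAt σ u j → IsMinNc r p α σ u j) ∧
    (∀ j j', IsMinNc r p α σ u j → IsMinNc r p α σ u j' → σ u j = σ u j')

/-- Right endpoint `min (C_j, t)` of the lifetime of `j` w.r.t. reference time `t`. -/
def lifeEnd (p : J → ℝ) (σ : ℝ → J → ℝ) (t : ℝ) (j : J) : ℝ :=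
  (min (cTime p σ j) (t : EReal)).toReal

/-- The lifetime `I_j = [r j, min (C_j, t)]` of job `j`. -/
def lifetime (r p : J → ℝ) (σ : ℝ → J → ℝ) (t : ℝ) (j : J) : Set ℝ :=
  Set.Icc (r j) (lifeEnd p σ t j)

/-- `E_N`-edge of the borrow graph: `i` is processed at some time of `I_j`
    while being non-clairvoyant. -/
def ENedge (r p : J → ℝ) (α : ℝ) (σ : ℝ → J → ℝ) (t : ℝ) (j i : J) : Prop :=
  ∃ u ∈ lifetime r p σ t j, procAt σ u i ∧ ncAt r p α σ u i

/-- `E_C`-edge of the borrow graph: `i` is processed at some time of `I_j`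
    while being clairvoyant. -/
def ECedge (r p : J → ℝ) (α : ℝ) (σ : ℝ → J → ℝ) (t : ℝ) (j i : J) : Prop :=
  ∃ u ∈ lifetime r p σ t j, procAt σ u i ∧ clAt r p α σ u i

/-- Edge of the borrow graph `G_B`. -/
def borrowEdge (r p : J → ℝ) (α : ℝ) (σ : ℝ → J → ℝ) (t : ℝ) (j i : J) : Prop :=
  ENedge r p α σ t j i ∨ ECedge r p α σ t j i

/-- `reaches j i` iff `i ∈ R_j`, i.e. `i` is reachable from `j` in the borrow
    graph (`j` itself included). -/
def reaches (r p : J → ℝ) (α : ℝ) (σ : ℝ → J → ℝ) (t : ℝ) : J → J → Prop :=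
  Relation.ReflTransGen (borrowEdge r p α σ t)

/-- Truncated progress `ȳ_j = min (y_j(t), α p_j)`. -/
def truncY (p : J → ℝ) (α : ℝ) (σ : ℝ → J → ℝ) (t : ℝ) (j : J) : ℝ :=
  min (workDone σ j t) (α * p j)

end

/-!
A non-clairvoyant job that is processed at time `w` has the least progress among `N(w)`, since
in the SRPT branch only a clairvoyant job runs. Both `i` and `j` stay in `N(w)` for all `w`
between the `E_N`-time `u` and `t`, so `i` is processed only while `y_i ≤ y_j`. Hence `i` cannot
overtake `j`: after the last time `v ≤ t` with `y_i(v) ≤ y_j(v)` the job `i` is idle, while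
`y_j` keeps growing.
-/

section

variable {J : Type*} {r p : J → ℝ} {α : ℝ} {σ : ℝ → J → ℝ}

lemma lifeEnd_eq_of_availAt {t : ℝ} {j : J} (hj : availAt r p σ t j) :
    lifeEnd p σ t j = t := by
  rw [lifeEnd, min_eq_right hj.2.le, EReal.toReal_coe]

variable [Fintype J]

namespace IsSchedule

lemma le_one (hs : IsSchedule r p σ) (u : ℝ) (j : J) : σ u j ≤ 1 :=
  (Finset.single_le_sum (fun j' _ => hs.nonneg u j') (Finset.mem_univ j)).trans
    (hs.sum_le_one u)

lemma intervalIntegrable (hs : IsSchedule r p σ) (j : J) (a b : ℝ) :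
    IntervalIntegrable (fun v => σ v j) volume a b := by
  constructor <;>
  · refine Measure.integrableOn_of_bounded (M := 1) measure_Ioc_lt_top.ne
      (hs.meas j).aestronglyMeasurable (Filter.Eventually.of_forall fun x => ?_)
    rw [Real.norm_eq_abs, abs_of_nonneg (hs.nonneg x j)]
    exact hs.le_one x j

lemma workDone_add_integral (hs : IsSchedule r p σ) (j : J) (a b : ℝ) :
    workDone σ j a + ∫ v in a..b, σ v j = workDone σ j b :=
  intervalIntegral.integral_add_adjacent_intervals (hs.intervalIntegrable j 0 a)
    (hs.intervalIntegrable j a b)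

lemma workDone_mono (hs : IsSchedule r p σ) (j : J) : Monotone (workDone σ j) := by
  intro a b hab
  rw [← hs.workDone_add_integral j a b]
  exact le_add_of_nonneg_right (intervalIntegral.integral_nonneg hab fun x _ => hs.nonneg x j)

lemma continuous_workDone (hs : IsSchedule r p σ) (j : J) : Continuous (workDone σ j) :=
  intervalIntegral.continuous_primitive (hs.intervalIntegrable j) 0

lemma workDone_eq_of_forall_Ioc_eq_zero (hs : IsSchedule r p σ) {j : J} {a b : ℝ}
    (hab : a ≤ b) (h : ∀ w ∈ Ioc a b, σ w j = 0) : workDone σ j b = workDone σ j a := by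
  rw [← hs.workDone_add_integral j a b, intervalIntegral.integral_of_le hab,
    setIntegral_congr_fun measurableSet_Ioc h]
  simp

lemma workDone_le_workDone_of_procAt_imp_le (hs : IsSchedule r p σ) {i j : J} {u t : ℝ}
    (hut : u ≤ t) (hu : workDone σ i u ≤ workDone σ j u)
    (hproc : ∀ w ∈ Ioc u t, procAt σ w i → workDone σ i w ≤ workDone σ j w) :
    workDone σ i t ≤ workDone σ j t := by
  set S : Set ℝ := Icc u t ∩ {w | workDone σ i w ≤ workDone σ j w}
  have huS : u ∈ S := ⟨⟨le_rfl, hut⟩, hu⟩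
  have hSbdd : BddAbove S := ⟨t, fun _ hx => hx.1.2⟩
  have hSclosed : IsClosed S :=
    isClosed_Icc.inter (isClosed_le (hs.continuous_workDone i) (hs.continuous_workDone j))
  have hvS : sSup S ∈ S := hSclosed.csSup_mem ⟨u, huS⟩ hSbdd
  have hidle : ∀ w ∈ Ioc (sSup S) t, σ w i = 0 := by
    intro w hw
    by_contra hne
    have huw : u ≤ w := (le_csSup hSbdd huS).trans hw.1.le
    have hwS : w ∈ S := ⟨⟨huw, hw.2⟩,
      hproc w ⟨(le_csSup hSbdd huS).trans_lt hw.1, hw.2⟩ ((hs.nonneg w i).lt_of_ne' hne)⟩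
    exact (le_csSup hSbdd hwS).not_gt hw.1
  calc workDone σ i t = workDone σ i (sSup S) :=
        hs.workDone_eq_of_forall_Ioc_eq_zero hvS.1.2 hidle
    _ ≤ workDone σ j (sSup S) := hvS.2
    _ ≤ workDone σ j t := hs.workDone_mono j hvS.1.2

end IsSchedule

lemma IsALG.workDone_le_of_procAt_of_ncAt (halg : IsALG r p α σ) {w : ℝ} {i j : J}
    (hpi : procAt σ w i) (hni : ncAt r p α σ w i) (hnj : ncAt r p α σ w j) :
    workDone σ i w ≤ workDone σ j w := by
  have havail : ∃ k, availAt r p σ w k := ⟨i, hni.1⟩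
  by_cases hsrpt : SrptCond r p α σ w
  · obtain ⟨k, hk, hzero⟩ := halg.srpt_branch w havail hsrpt
    obtain rfl | hik := eq_or_ne i k
    · exact absurd hk.1.2 hni.2.not_gt
    · exact absurd (hzero i hik) hpi.ne'
  · exact ((halg.setf_branch w havail hsrpt).1 i hpi).2 j hnj

lemma ncAt_of_le (hs : IsSchedule r p σ) {j : J} {w t : ℝ} (hj : ncAt r p α σ t j)
    (hrw : r j ≤ w) (hwt : w ≤ t) : ncAt r p α σ w j :=
  ⟨⟨hrw, lt_of_le_of_lt (EReal.coe_le_coe_iff.mpr hwt) hj.1.2⟩,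
    (hs.workDone_mono j hwt).trans hj.2⟩

end

theorem stmt4_general {J : Type*} [Fintype J] {r p : J → ℝ} {α : ℝ} {σ : ℝ → J → ℝ}
    (halg : IsALG r p α σ) (t : ℝ)
    (j i : J) (hj : ncAt r p α σ t j) (hi : ncAt r p α σ t i)
    (he : ENedge r p α σ t j i) :
    workDone σ i t ≤ workDone σ j t := by
  obtain ⟨u, ⟨hrj, hu⟩, hpi, hni⟩ := he
  have hs := halg.sched
  have hut : u ≤ t := lifeEnd_eq_of_availAt hj.1 ▸ hu
  have hboth : ∀ w ∈ Icc u t, ncAt r p α σ w i ∧ ncAt r p α σ w j := fun w hw =>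
    ⟨ncAt_of_le hs hi (hni.1.1.trans hw.1) hw.2, ncAt_of_le hs hj (hrj.trans hw.1) hw.2⟩
  refine hs.workDone_le_workDone_of_procAt_imp_le hut
    (halg.workDone_le_of_procAt_of_ncAt hpi hni (hboth u ⟨le_rfl, hut⟩).2) fun w hw hpw => ?_
  obtain ⟨hnwi, hnwj⟩ := hboth w (Ioc_subset_Icc_self hw)
  exact halg.workDone_le_of_procAt_of_ncAt hpw hnwi hnwj

/-- If `j, i ∈ N(t)` and `(j,i)` is an `E_N`-edge of the borrow
graph, then `y_j(t) ≥ y_i(t)`. -/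
theorem stmt4 {J : Type*} [Fintype J] {r p : J → ℝ} {α : ℝ} {σ : ℝ → J → ℝ}
    (hinst : IsInstance r p α) (halg : IsALG r p α σ) (t : ℝ) (ht : 0 ≤ t)
    (j i : J) (hj : ncAt r p α σ t j) (hi : ncAt r p α σ t i)
    (he : ENedge r p α σ t j i) :
    workDone σ i t ≤ workDone σ j t :=
  stmt4_general halg t j i hj hi he
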